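/- arXiv:2202.03253 — 5 statements merged into one kernel-verified Lean document; each statement's English description precedes it below -/
import Mathlib

section
/- The integral over the real line of exp(-α x²/2)/(1+x²) equals 2π·exp(α/2)·Φ(-√α), where Φ is the standard normal CDF. Equivalently, ∫_{√α}^∞ z·exp(-(1+x²)z²/2) dz integrated over x yields this normalization. -/
open MeasureTheory Real Set

/-- The standard normal cumulative distribution function. -/
noncomputable def Phi (t : ℝ) : ℝ := ∫ u in Set.Iic t, Real.exp (-u ^ 2 / 2) / Real.sqrt (2 * π)

lemma aux_hasDerivAt (c z : ℝ) (hc : 0 < c) :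
    HasDerivAt (fun z : ℝ => -Real.exp (-(c * z ^ 2) / 2) / c)
      (z * Real.exp (-(c * z ^ 2) / 2)) z := by
  have h1 : HasDerivAt (fun z : ℝ => -(c * z ^ 2) / 2) (-(c * z)) z := by
    have := ((hasDerivAt_pow 2 z).const_mul c).neg.div_const 2
    refine this.congr_deriv ?_
    ring
  have h3 := h1.exp.neg.div_const c
  refine h3.congr_deriv ?_
  field_simp

lemma aux_tendsto (c : ℝ) (hc : 0 < c) :
    Filter.Tendsto (fun z : ℝ => -Real.exp (-(c * z ^ 2) / 2) / c) Filter.atTop (nhds 0) := by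
  have h1 : Filter.Tendsto (fun z : ℝ => -(c * z ^ 2) / 2) Filter.atTop Filter.atBot := by
    have h2 : Filter.Tendsto (fun z : ℝ => z ^ 2) Filter.atTop Filter.atTop :=
      Filter.tendsto_pow_atTop (by norm_num)
    have h3 : Filter.Tendsto (fun z : ℝ => (-(c/2)) * z ^ 2) Filter.atTop Filter.atBot :=
      Filter.Tendsto.const_mul_atTop_of_neg (by linarith) h2
    convert h3 using 2
    ring
  have := (Real.tendsto_exp_atBot.comp h1).neg.div_const c
  simpa using this

lemma aux_integral (c b : ℝ) (hc : 0 < c) (hb : 0 ≤ b) :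
    ∫ z in Set.Ioi b, z * Real.exp (-(c * z ^ 2) / 2) = Real.exp (-(c * b ^ 2) / 2) / c := by
  have := integral_Ioi_of_hasDerivAt_of_nonneg' (g := fun z : ℝ => -Real.exp (-(c * z ^ 2) / 2) / c)
    (g' := fun z => z * Real.exp (-(c * z ^ 2) / 2)) (a := b) (l := 0)
    (fun x _ => aux_hasDerivAt c x hc)
    (fun x hx => mul_nonneg (le_trans hb (le_of_lt hx)) (Real.exp_pos _).le)
    (aux_tendsto c hc)
  rw [this]
  field_simp
  ring

lemma aux_integrable (c b : ℝ) (hc : 0 < c) (hb : 0 ≤ b) :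
    IntegrableOn (fun z => z * Real.exp (-(c * z ^ 2) / 2)) (Set.Ioi b) := by
  exact integrableOn_Ioi_deriv_of_nonneg' (fun x _ => aux_hasDerivAt c x hc)
    (fun x hx => mul_nonneg (le_trans hb (le_of_lt hx)) (Real.exp_pos _).le)
    (aux_tendsto c hc)

noncomputable def Fnc (x z : ℝ) : ℝ := z * Real.exp (-((1 + x ^ 2) * z ^ 2) / 2)

lemma Fnc_nonneg {x z : ℝ} (hz : 0 ≤ z) : 0 ≤ Fnc x z :=
  mul_nonneg hz (Real.exp_pos _).le

lemma Fnc_cont : Continuous (Function.uncurry Fnc) := by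
  unfold Function.uncurry Fnc
  apply Continuous.mul continuous_snd
  apply Real.continuous_exp.comp
  fun_prop

lemma Fnc_slice (x a : ℝ) (ha : 0 ≤ a) :
    ∫ z in Set.Ioi a, Fnc x z = Real.exp (-((1 + x ^ 2) * a ^ 2) / 2) / (1 + x ^ 2) :=
  aux_integral (1 + x ^ 2) a (by positivity) ha

lemma Fnc_slice_integrable (x a : ℝ) (ha : 0 ≤ a) :
    IntegrableOn (fun z => Fnc x z) (Set.Ioi a) :=
  aux_integrable (1 + x ^ 2) a (by positivity) ha

lemma Fnc_norm_integral (x a : ℝ) (ha : 0 ≤ a) :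
    ∫ z in Set.Ioi a, ‖Fnc x z‖ = Real.exp (-((1 + x ^ 2) * a ^ 2) / 2) / (1 + x ^ 2) := by
  rw [← Fnc_slice x a ha]
  apply setIntegral_congr_fun measurableSet_Ioi
  intro z hz
  exact Real.norm_of_nonneg (Fnc_nonneg (ha.trans (le_of_lt hz)))

lemma Fnc_integrable (α : ℝ) (hα : 0 < α) :
    Integrable (Function.uncurry Fnc)
      (MeasureTheory.volume.prod ((MeasureTheory.volume : Measure ℝ).restrict
        (Set.Ioi (Real.sqrt α)))) := by
  have ha : (0:ℝ) ≤ Real.sqrt α := Real.sqrt_nonneg α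
  have ha2 : Real.sqrt α ^ 2 = α := Real.sq_sqrt hα.le
  rw [MeasureTheory.integrable_prod_iff Fnc_cont.aestronglyMeasurable]
  constructor
  · exact Filter.Eventually.of_forall (fun x => Fnc_slice_integrable x _ ha)
  · simp only [Function.uncurry_apply_pair]
    have heq : ∀ x : ℝ, (∫ z in Set.Ioi (Real.sqrt α), ‖Fnc x z‖)
        = Real.exp (-((1 + x ^ 2) * α) / 2) / (1 + x ^ 2) := by
      intro x
      rw [Fnc_norm_integral x _ ha, ha2]
    simp_rw [heq]
    apply Integrable.mono (integrable_exp_neg_mul_sq (half_pos hα))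
    · apply Continuous.aestronglyMeasurable
      apply Continuous.div (by fun_prop) (by fun_prop)
      intro x; positivity
    · refine Filter.Eventually.of_forall (fun x => ?_)
      have h1 : (0:ℝ) < 1 + x ^ 2 := by positivity
      rw [Real.norm_eq_abs, Real.norm_eq_abs, abs_of_nonneg (by positivity),
        abs_of_nonneg (Real.exp_pos _).le]
      calc Real.exp (-((1 + x ^ 2) * α) / 2) / (1 + x ^ 2)
          ≤ Real.exp (-((1 + x ^ 2) * α) / 2) / 1 :=
            div_le_div_of_nonneg_left (Real.exp_pos _).le one_pos
              (by nlinarith [sq_nonneg x])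
        _ = Real.exp (-((1 + x ^ 2) * α) / 2) := by rw [div_one]
        _ ≤ Real.exp (-(α / 2) * x ^ 2) := by
            apply Real.exp_le_exp.2
            nlinarith [sq_nonneg x, hα.le]

lemma Fnc_x_integral (z : ℝ) (hz : 0 < z) :
    ∫ x : ℝ, Fnc x z = Real.sqrt (2 * π) * Real.exp (-z ^ 2 / 2) := by
  have heq : ∀ x : ℝ, Fnc x z
      = (z * Real.exp (-z ^ 2 / 2)) * Real.exp (-(z ^ 2 / 2) * x ^ 2) := by
    intro x
    rw [Fnc, mul_assoc, ← Real.exp_add]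
    congr 2
    ring
  simp_rw [heq]
  rw [MeasureTheory.integral_const_mul, integral_gaussian]
  have hsqnn : (0:ℝ) ≤ 2 * π := by positivity
  have hsq : π / (z ^ 2 / 2) = (2 * π) / z ^ 2 := by
    field_simp
  rw [hsq, Real.sqrt_div hsqnn, Real.sqrt_sq hz.le]
  field_simp

lemma Phi_neg_eq (a : ℝ) :
    Phi (-a) = (∫ z in Set.Ioi a, Real.exp (-z ^ 2 / 2)) / Real.sqrt (2 * π) := by
  rw [Phi, ← integral_comp_neg_Ioi, ← integral_div]
  simp only [neg_sq]

theorem nc1_normalization (α : ℝ) (hα : 0 < α) :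
    ∫ x : ℝ, Real.exp (-(α * x ^ 2) / 2) / (1 + x ^ 2)
      = 2 * π * Real.exp (α / 2) * Phi (-Real.sqrt α) := by
  have ha : 0 < Real.sqrt α := Real.sqrt_pos.2 hα
  have ha2 : Real.sqrt α ^ 2 = α := Real.sq_sqrt hα.le
  have hpt : ∀ x : ℝ, Real.exp (-(α * x ^ 2) / 2) / (1 + x ^ 2)
      = Real.exp (α / 2) * ∫ z in Set.Ioi (Real.sqrt α), Fnc x z := by
    intro x
    rw [Fnc_slice x _ ha.le, ha2, ← mul_div_assoc, ← Real.exp_add]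
    congr 2
    ring
  calc ∫ x : ℝ, Real.exp (-(α * x ^ 2) / 2) / (1 + x ^ 2)
      = Real.exp (α / 2) * ∫ x : ℝ, ∫ z in Set.Ioi (Real.sqrt α), Fnc x z := by
        simp_rw [hpt]; rw [MeasureTheory.integral_const_mul]
    _ = Real.exp (α / 2) * ∫ z in Set.Ioi (Real.sqrt α), ∫ x : ℝ, Fnc x z := by
        rw [MeasureTheory.integral_integral_swap (Fnc_integrable α hα)]
    _ = Real.exp (α / 2) * ∫ z in Set.Ioi (Real.sqrt α),
          Real.sqrt (2 * π) * Real.exp (-z ^ 2 / 2) := by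
        congr 1
        apply setIntegral_congr_fun measurableSet_Ioi
        intro z hz
        exact Fnc_x_integral z (ha.trans hz)
    _ = Real.exp (α / 2) * (Real.sqrt (2 * π)
          * ∫ z in Set.Ioi (Real.sqrt α), Real.exp (-z ^ 2 / 2)) := by
        rw [MeasureTheory.integral_const_mul]
    _ = 2 * π * Real.exp (α / 2) * Phi (-Real.sqrt α) := by
        have h2π : Real.sqrt (2 * π) * Real.sqrt (2 * π) = 2 * π :=
          Real.mul_self_sqrt (by positivity)
        have hne : Real.sqrt (2 * π) ≠ 0 := by
          intro h
          rw [h, mul_zero] at h2π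
          nlinarith [Real.pi_pos]
        rw [Phi_neg_eq, ← h2π]
        field_simp
        rw [Real.sqrt_sq (Real.sqrt_nonneg _)]
end

section
/- For the NC(1) distribution with density f(x) = c₁·exp(-β x²/2)/(1+(1-β)x²), 0 < β < 1, the fourth moment is E(X⁴) = (1-β)^{-2}·(c₁·√(2π/β)·(1-2β)/β + 1). -/
open MeasureTheory Real Set

lemma Phi_pos (t : ℝ) : 0 < Phi t := by
  have hfun : (fun u : ℝ => Real.exp (-u ^ 2 / 2) / Real.sqrt (2 * π))
      = fun u : ℝ => Real.exp (-(1/2 : ℝ) * u ^ 2) / Real.sqrt (2 * π) := by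
    funext u; congr 1; ring
  have hint : Integrable (fun u : ℝ => Real.exp (-u ^ 2 / 2) / Real.sqrt (2 * π)) := by
    rw [hfun]
    exact (integrable_exp_neg_mul_sq (by norm_num)).div_const _
  rw [Phi, setIntegral_pos_iff_support_of_nonneg_ae]
  · have hsupp : Function.support (fun u : ℝ => Real.exp (-u ^ 2 / 2) / Real.sqrt (2 * π))
        = univ := by
      ext u
      have h1 : 0 < Real.exp (-u ^ 2 / 2) / Real.sqrt (2 * π) := by positivity
      simp only [Function.mem_support, mem_univ, iff_true]
      exact ne_of_gt h1
    rw [hsupp, univ_inter, Real.volume_Iic]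
    exact ENNReal.zero_lt_top
  · exact Filter.Eventually.of_forall fun u => by positivity
  · exact hint.integrableOn

lemma nc1_norm_integral {β : ℝ} (hβ : 0 < β) (hβ1 : β < 1) :
    ∫ x : ℝ, Real.exp (-(β * x ^ 2) / 2) / (1 + (1 - β) * x ^ 2)
      = 2 * π * Real.exp (β / (2 * (1 - β))) * Phi (-Real.sqrt (β / (1 - β)))
        / Real.sqrt (1 - β) := by
  have ha : (0:ℝ) < 1 - β := by linarith
  set a : ℝ := 1 - β with ha'
  -- Step A: pointwise representation of 1/(1+a x²) as an integral
  have hpoint : ∀ x : ℝ, Real.exp (-(β * x ^ 2) / 2) / (1 + a * x ^ 2)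
      = ∫ s in Ioi (0:ℝ),
          Real.exp (-(β * x ^ 2) / 2) * Real.exp (-((1 + a * x ^ 2) * s)) := by
    intro x
    have hD : (0:ℝ) < 1 + a * x ^ 2 := by positivity
    have h2 := integral_comp_mul_left_Ioi (fun y => Real.exp (-y)) 0 hD
    simp only [mul_zero, smul_eq_mul] at h2
    rw [MeasureTheory.integral_const_mul, h2, integral_exp_neg_Ioi_zero, mul_one, div_eq_mul_inv]
  have hmeas : Continuous (fun p : ℝ × ℝ =>
      Real.exp (-(β * p.1 ^ 2) / 2) * Real.exp (-((1 + a * p.1 ^ 2) * p.2))) := by fun_prop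
  have hInt : Integrable (fun p : ℝ × ℝ =>
      Real.exp (-(β * p.1 ^ 2) / 2) * Real.exp (-((1 + a * p.1 ^ 2) * p.2)))
      (volume.prod (volume.restrict (Ioi 0))) := by
    have hg : Integrable (fun p : ℝ × ℝ => Real.exp (-(β/2) * p.1 ^ 2) * Real.exp (-p.2))
        (volume.prod (volume.restrict (Ioi 0))) := by
      have h1 : Integrable (fun x : ℝ => Real.exp (-(β/2) * x ^ 2)) volume :=
        integrable_exp_neg_mul_sq (by positivity)
      have h2 : Integrable (fun s : ℝ => Real.exp (-s)) (volume.restrict (Ioi 0)) := by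
        have h := exp_neg_integrableOn_Ioi 0 one_pos
        have h' : IntegrableOn (fun s : ℝ => Real.exp (-s)) (Ioi 0) := by simpa using h
        exact h'
      exact Integrable.mul_prod h1 h2
    refine hg.mono' hmeas.aestronglyMeasurable ?_
    have hae : ∀ᵐ p : ℝ × ℝ ∂(volume.prod (volume.restrict (Ioi 0))), p.2 ∈ Ioi (0:ℝ) := by
      rw [ae_iff]
      have hset : {p : ℝ × ℝ | ¬ p.2 ∈ Ioi (0:ℝ)} = (univ : Set ℝ) ×ˢ (Ioi (0:ℝ))ᶜ := by
        ext p; simp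
      rw [hset, Measure.prod_prod, Measure.restrict_apply measurableSet_Ioi.compl,
        compl_inter_self]
      simp
    filter_upwards [hae] with p hp
    have hp' : (0:ℝ) < p.2 := hp
    rw [Real.norm_eq_abs, abs_of_nonneg (by positivity)]
    have h1 : Real.exp (-((1 + a * p.1 ^ 2) * p.2)) ≤ Real.exp (-p.2) := by
      apply Real.exp_le_exp.2
      nlinarith [sq_nonneg p.1, mul_nonneg (mul_nonneg ha.le (sq_nonneg p.1)) hp'.le]
    have h2 : Real.exp (-(β * p.1 ^ 2) / 2) = Real.exp (-(β/2) * p.1 ^ 2) := by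
      congr 1; ring
    rw [h2]
    exact mul_le_mul_of_nonneg_left h1 (Real.exp_nonneg _)
  -- Step C: inner Gaussian integral
  have hinner : ∀ s ∈ Ioi (0:ℝ),
      (∫ x : ℝ, Real.exp (-(β * x ^ 2) / 2) * Real.exp (-((1 + a * x ^ 2) * s)))
        = Real.sqrt (2*π) * (Real.exp (-s) / Real.sqrt (β + 2*a*s)) := by
    intro s hs
    have hs' : (0:ℝ) < s := hs
    have hb : (0:ℝ) < β/2 + a*s := by positivity
    have h1 : ∀ x : ℝ, Real.exp (-(β * x ^ 2) / 2) * Real.exp (-((1 + a * x ^ 2) * s))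
        = Real.exp (-s) * Real.exp (-(β/2 + a*s) * x ^ 2) := by
      intro x; rw [← Real.exp_add, ← Real.exp_add]; congr 1; ring
    simp only [h1]
    rw [MeasureTheory.integral_const_mul, integral_gaussian]
    rw [show π / (β/2 + a*s) = (2*π)/(β+2*a*s) by
      rw [div_eq_div_iff (by positivity) (by positivity)]; ring]
    rw [Real.sqrt_div (by positivity : (0:ℝ) ≤ 2*π)]
    ring
  -- swap the integrals
  have hswap : ∫ x : ℝ, Real.exp (-(β * x ^ 2) / 2) / (1 + a * x ^ 2)
      = ∫ s in Ioi (0:ℝ), ∫ x : ℝ,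
          Real.exp (-(β * x ^ 2) / 2) * Real.exp (-((1 + a * x ^ 2) * s)) := by
    rw [show (fun x : ℝ => Real.exp (-(β * x ^ 2) / 2) / (1 + a * x ^ 2))
        = fun x : ℝ => ∫ s in Ioi (0:ℝ),
            Real.exp (-(β * x ^ 2) / 2) * Real.exp (-((1 + a * x ^ 2) * s))
      from funext hpoint]
    exact integral_integral_swap hInt
  -- change of variables u = √(β + 2 a t)
  have himg : (fun t : ℝ => Real.sqrt (β + 2*a*t)) '' Ioi 0 = Ioi (Real.sqrt β) := by
    ext u
    simp only [mem_image, mem_Ioi]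
    constructor
    · rintro ⟨t, ht, rfl⟩
      exact Real.sqrt_lt_sqrt hβ.le (by nlinarith)
    · intro hu
      have hu0 : 0 < u := lt_of_le_of_lt (Real.sqrt_nonneg β) hu
      have hβu : β < u ^ 2 := by
        nlinarith [Real.sq_sqrt hβ.le, Real.sqrt_nonneg β]
      refine ⟨(u^2 - β)/(2*a), div_pos (by linarith) (by linarith), ?_⟩
      have h3 : β + 2*a*((u^2 - β)/(2*a)) = u^2 := by field_simp; ring
      rw [h3, Real.sqrt_sq hu0.le]
  have hderiv : ∀ t ∈ Ioi (0:ℝ), HasDerivWithinAt (fun t : ℝ => Real.sqrt (β + 2*a*t))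
      (a / Real.sqrt (β + 2*a*t)) (Ioi 0) t := by
    intro t ht
    have ht' : (0:ℝ) < t := ht
    have hpos : (0:ℝ) < β + 2*a*t := by nlinarith
    have h1 : HasDerivAt (fun t : ℝ => β + 2*a*t) (2*a) t := by
      simpa using ((hasDerivAt_id t).const_mul (2*a)).const_add β
    have h2 := (Real.hasDerivAt_sqrt hpos.ne').comp t h1
    have hsp : (0:ℝ) < Real.sqrt (β + 2*a*t) := Real.sqrt_pos.mpr hpos
    rw [show a / Real.sqrt (β + 2*a*t) = 1 / (2 * Real.sqrt (β + 2*a*t)) * (2*a) by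
      rw [div_mul_eq_mul_div, one_mul, mul_div_mul_left _ _ two_ne_zero]]
    exact h2.hasDerivWithinAt
  have hinj : InjOn (fun t : ℝ => Real.sqrt (β + 2*a*t)) (Ioi 0) := by
    intro t1 h1 t2 h2 heq
    have ht1 : (0:ℝ) < t1 := h1
    have ht2 : (0:ℝ) < t2 := h2
    have e1 : (0:ℝ) ≤ β + 2*a*t1 := by nlinarith
    have e2 : (0:ℝ) ≤ β + 2*a*t2 := by nlinarith
    have := (Real.sqrt_inj e1 e2).mp heq
    have h3 : 2*a*t1 = 2*a*t2 := by linarith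
    exact mul_left_cancel₀ (by positivity) h3
  have hsub := integral_image_eq_integral_abs_deriv_smul measurableSet_Ioi hderiv hinj
      (fun u => Real.exp (-u^2/(2*a)))
  rw [himg] at hsub
  have hsub2 : (∫ t in Ioi (0:ℝ), |a / Real.sqrt (β + 2*a*t)| •
        Real.exp (-(Real.sqrt (β + 2*a*t))^2/(2*a)))
      = (a * Real.exp (-(β/(2*a)))) *
          ∫ t in Ioi (0:ℝ), Real.exp (-t) / Real.sqrt (β + 2*a*t) := by
    rw [← MeasureTheory.integral_const_mul]
    refine setIntegral_congr_fun measurableSet_Ioi fun t ht => ?_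
    have ht' : (0:ℝ) < t := ht
    have hpos : (0:ℝ) < β + 2*a*t := by nlinarith
    have hsp : (0:ℝ) < Real.sqrt (β + 2*a*t) := Real.sqrt_pos.mpr hpos
    rw [smul_eq_mul, abs_of_nonneg (by positivity), Real.sq_sqrt hpos.le]
    rw [show -(β + 2*a*t)/(2*a) = -(β/(2*a)) + (-t) by field_simp; ring, Real.exp_add]
    field_simp
  have hIoiβ : ∫ t in Ioi (0:ℝ), Real.exp (-t) / Real.sqrt (β + 2*a*t)
      = Real.exp (β/(2*a)) / a *
          ∫ u in Ioi (Real.sqrt β), Real.exp (-u^2/(2*a)) := by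
    rw [hsub, hsub2, ← mul_assoc]
    rw [show Real.exp (β/(2*a))/a * (a * Real.exp (-(β/(2*a)))) = 1 by
      rw [Real.exp_neg]; field_simp]
    rw [one_mul]
  -- rescale to the standard Gaussian
  have hE : ∫ u in Ioi (Real.sqrt β), Real.exp (-u^2/(2*a))
      = Real.sqrt a * ∫ v in Ioi (Real.sqrt (β/a)), Real.exp (-v^2/2) := by
    have hsa : (0:ℝ) < Real.sqrt a := Real.sqrt_pos.mpr ha
    have h := integral_comp_mul_left_Ioi (fun u => Real.exp (-u^2/(2*a)))
        (Real.sqrt (β/a)) hsa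
    have hk : Real.sqrt a * Real.sqrt (β/a) = Real.sqrt β := by
      rw [← Real.sqrt_mul ha.le]
      congr 1
      field_simp
    have hv : ∀ v : ℝ, Real.exp (-(Real.sqrt a * v)^2/(2*a)) = Real.exp (-v^2/2) := by
      intro v
      congr 1
      rw [mul_pow, Real.sq_sqrt ha.le]
      field_simp
    simp only [hv, hk, smul_eq_mul] at h
    rw [h, ← mul_assoc, mul_inv_cancel₀ hsa.ne', one_mul]
  -- relate to Phi
  have hPhi : ∫ v in Ioi (Real.sqrt (β/a)), Real.exp (-v^2/2)
      = Real.sqrt (2*π) * Phi (-Real.sqrt (β/a)) := by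
    have h := integral_comp_neg_Iic (-Real.sqrt (β/a)) (fun u => Real.exp (-u^2/2))
    simp only [neg_neg, neg_sq] at h
    rw [Phi, ← h]
    rw [MeasureTheory.integral_div]
    rw [mul_div_cancel₀ _ (by positivity : Real.sqrt (2*π) ≠ 0)]
  -- assemble
  rw [hswap, setIntegral_congr_fun measurableSet_Ioi hinner,
    MeasureTheory.integral_const_mul, hIoiβ, hE, hPhi]
  have h2π : Real.sqrt (2*π) * Real.sqrt (2*π) = 2*π :=
    Real.mul_self_sqrt (by positivity)
  have haa : Real.sqrt a * Real.sqrt a = a := Real.mul_self_sqrt ha.le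
  have hsa : (0:ℝ) < Real.sqrt a := Real.sqrt_pos.mpr ha
  generalize Phi (-Real.sqrt (β/a)) = P
  generalize Real.exp (β/(2*a)) = X
  generalize hQ : Real.sqrt (2*π) = Q at h2π ⊢
  generalize hS : Real.sqrt a = S at haa hsa ⊢
  rw [eq_div_iff (ne_of_gt hsa)]
  field_simp
  linear_combination (X * P * (S * S)) * h2π + (2 * π * X * P) * haa

theorem nc1_fourth_moment (β c₁ : ℝ) (hβ : 0 < β) (hβ1 : β < 1)
    (hc₁ : c₁ = Real.sqrt (1 - β) * Real.exp (-(β / (2 * (1 - β)))) /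
        (2 * π * Phi (-Real.sqrt (β / (1 - β))))) :
    ∫ x : ℝ, x ^ 4 * (c₁ * Real.exp (-(β * x ^ 2) / 2) / (1 + (1 - β) * x ^ 2))
      = ((1 - β)⁻¹) ^ 2 * (c₁ * Real.sqrt (2 * π / β) * (1 - 2 * β) / β + 1) := by
  have ha : (0:ℝ) < 1 - β := by linarith
  have hb2 : (0:ℝ) < β/2 := by linarith
  -- integrability facts
  have hEeq : (fun x : ℝ => Real.exp (-(β/2) * x ^ 2))
      = fun x : ℝ => Real.exp (-(β * x ^ 2) / 2) := by
    funext x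
    rw [show -(β/2) * x ^ 2 = -(β * x ^ 2) / 2 by ring]
  have hEi : Integrable (fun x : ℝ => Real.exp (-(β * x ^ 2) / 2)) :=
    hEeq ▸ integrable_exp_neg_mul_sq hb2
  have hx2eq : (fun x : ℝ => x ^ (2:ℝ) * Real.exp (-(β/2) * x ^ 2))
      = fun x : ℝ => x ^ 2 * Real.exp (-(β * x ^ 2) / 2) := by
    funext x
    rw [show x ^ (2:ℝ) = x ^ (2:ℕ) by norm_cast,
      show -(β/2) * x ^ 2 = -(β * x ^ 2) / 2 by ring]
  have hx2E : Integrable (fun x : ℝ => x ^ 2 * Real.exp (-(β * x ^ 2) / 2)) :=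
    hx2eq ▸ integrable_rpow_mul_exp_neg_mul_sq hb2 (s := 2) (by norm_num)
  have hfrac : Integrable (fun x : ℝ =>
      Real.exp (-(β * x ^ 2) / 2) / (1 + (1 - β) * x ^ 2)) := by
    refine hEi.mono' ?_ (Filter.Eventually.of_forall fun x => ?_)
    · exact ((Real.continuous_exp.comp (by fun_prop)).div (by fun_prop)
        fun x => by positivity).aestronglyMeasurable
    · rw [Real.norm_eq_abs, abs_of_nonneg (by positivity)]
      exact div_le_self (by positivity) (by nlinarith [sq_nonneg x])
  -- Gaussian integrals
  have hM0 : ∫ x : ℝ, Real.exp (-(β * x ^ 2) / 2) = Real.sqrt (2*π/β) := by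
    have h := integral_gaussian (β/2)
    rw [show π/(β/2) = 2*π/β by rw [div_div_eq_mul_div, mul_comm]] at h
    rw [← h]
    exact congrArg _ (funext fun x => by congr 1; ring)
  have hM2 : ∫ x : ℝ, x ^ 2 * Real.exp (-(β * x ^ 2) / 2) = Real.sqrt (2*π/β) / β := by
    have hG : Real.Gamma ((2+1)/2) = Real.sqrt π / 2 := by
      rw [show ((2+1)/2 : ℝ) = 1/2 + 1 by norm_num, Real.Gamma_add_one (by norm_num),
        Real.Gamma_one_half_eq]
      ring
    have hmul : Real.sqrt (2*π/β) * Real.sqrt (β/2) = Real.sqrt π := by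
      rw [← Real.sqrt_mul (by positivity)]
      congr 1
      field_simp
    have hsb : (0:ℝ) < Real.sqrt (β/2) := Real.sqrt_pos.mpr hb2
    calc ∫ x : ℝ, x ^ 2 * Real.exp (-(β * x ^ 2) / 2)
        = ∫ x : ℝ, (fun y : ℝ => y ^ 2 * Real.exp (-(β * y ^ 2)/2)) |x| := by
          refine congrArg _ (funext fun x => ?_)
          simp only
          rw [sq_abs]
      _ = 2 * ∫ x in Ioi (0:ℝ), x ^ 2 * Real.exp (-(β * x ^ 2)/2) :=
          integral_comp_abs (f := fun y : ℝ => y ^ 2 * Real.exp (-(β * y ^ 2)/2))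
      _ = 2 * ∫ x in Ioi (0:ℝ), x ^ (2:ℝ) * Real.exp (-(β/2) * x ^ (2:ℝ)) := by
          congr 1
          refine setIntegral_congr_fun measurableSet_Ioi fun x hx => ?_
          rw [show x ^ (2:ℝ) = x ^ (2:ℕ) by norm_cast,
            show -(β/2) * x ^ (2:ℕ) = -(β * x ^ 2) / 2 by ring]
      _ = 2 * ((β/2) ^ (-(2+1)/2 : ℝ) * (1/2) * Real.Gamma ((2+1)/2)) := by
          rw [integral_rpow_mul_exp_neg_mul_rpow two_pos (by norm_num) hb2]
      _ = Real.sqrt (2*π/β) / β := by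
          rw [hG]
          rw [show (-(2+1)/2 : ℝ) = -(1 + 1/2) by norm_num, Real.rpow_neg hb2.le,
            Real.rpow_add hb2, Real.rpow_one, ← Real.sqrt_eq_rpow]
          rw [← hmul]
          field_simp
  have hJ := nc1_norm_integral hβ hβ1
  have hPhiPos := Phi_pos (-Real.sqrt (β / (1 - β)))
  have hc₁J : c₁ * (∫ x : ℝ, Real.exp (-(β * x ^ 2) / 2) / (1 + (1 - β) * x ^ 2)) = 1 := by
    rw [hJ, hc₁, Real.exp_neg]
    have h2 : Real.exp (β/(2*(1-β))) ≠ 0 := Real.exp_ne_zero _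
    generalize hP : Phi (-Real.sqrt (β / (1 - β))) = P at hPhiPos ⊢
    generalize hX : Real.exp (β/(2*(1-β))) = X at h2 ⊢
    have h1 : Real.sqrt (1-β) ≠ 0 := by positivity
    generalize hS : Real.sqrt (1-β) = S at h1 ⊢
    field_simp
  have hdecomp : ∀ x : ℝ, x ^ 4 * (c₁ * Real.exp (-(β * x ^ 2) / 2) / (1 + (1 - β) * x ^ 2))
      = c₁ * ((1-β)⁻¹ * (x ^ 2 * Real.exp (-(β * x ^ 2) / 2))
          - ((1-β)⁻¹)^2 * Real.exp (-(β * x ^ 2) / 2)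
          + ((1-β)⁻¹)^2 * (Real.exp (-(β * x ^ 2) / 2) / (1 + (1-β) * x ^ 2))) := by
    intro x
    have hD : (1 + (1-β) * x ^ 2) ≠ 0 := by positivity
    field_simp
    ring
  calc ∫ x : ℝ, x ^ 4 * (c₁ * Real.exp (-(β * x ^ 2) / 2) / (1 + (1 - β) * x ^ 2))
      = ∫ x : ℝ, c₁ * ((1-β)⁻¹ * (x ^ 2 * Real.exp (-(β * x ^ 2) / 2))
          - ((1-β)⁻¹)^2 * Real.exp (-(β * x ^ 2) / 2)
          + ((1-β)⁻¹)^2 * (Real.exp (-(β * x ^ 2) / 2) / (1 + (1-β) * x ^ 2))) :=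
        congrArg _ (funext hdecomp)
    _ = c₁ * ((1-β)⁻¹ * (Real.sqrt (2*π/β)/β)
          - ((1-β)⁻¹)^2 * Real.sqrt (2*π/β)
          + ((1-β)⁻¹)^2 * ∫ x : ℝ, Real.exp (-(β * x ^ 2) / 2) / (1 + (1-β) * x ^ 2)) := by
        rw [MeasureTheory.integral_const_mul]
        congr 1
        have hI1 : Integrable (fun x : ℝ =>
            (1-β)⁻¹ * (x ^ 2 * Real.exp (-(β * x ^ 2) / 2))
              - ((1-β)⁻¹)^2 * Real.exp (-(β * x ^ 2) / 2)) :=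
          (hx2E.const_mul _).sub (hEi.const_mul _)
        rw [integral_add hI1 (hfrac.const_mul _),
          integral_sub (hx2E.const_mul _) (hEi.const_mul _),
          MeasureTheory.integral_const_mul, MeasureTheory.integral_const_mul,
          MeasureTheory.integral_const_mul, hM2, hM0]
    _ = (1-β)⁻¹ * (c₁ * (Real.sqrt (2*π/β)/β))
          - ((1-β)⁻¹)^2 * (c₁ * Real.sqrt (2*π/β))
          + ((1-β)⁻¹)^2 * (c₁ * ∫ x : ℝ, Real.exp (-(β * x ^ 2) / 2) / (1 + (1-β) * x ^ 2)) := by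
        ring
    _ = ((1 - β)⁻¹) ^ 2 * (c₁ * Real.sqrt (2 * π / β) * (1 - 2 * β) / β + 1) := by
        rw [hc₁J]
        field_simp
        ring
end

section
/- The CDF of the NC(1) distribution satisfies F(x) = (1/(√(2π)·Φ(-√α))) · ∫_{√α}^∞ Φ(√(1-β)·z·x)·exp(-z²/2) dz, where α = β/(1-β). -/
open MeasureTheory Real Set

lemma my_integral_comp_mul_left_Iic (g : ℝ → ℝ) (a : ℝ) {c : ℝ} (hc : 0 < c) :
    (∫ x in Iic a, g (c * x)) = c⁻¹ • ∫ x in Iic (c * a), g x := by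
  have h : ∀ t : ℝ, MeasurableSet (Iic t) := fun t => measurableSet_Iic
  rw [← integral_indicator (h a), ← integral_indicator (h (c * a)),
    ← abs_of_pos (inv_pos.mpr hc), ← Measure.integral_comp_mul_left]
  congr
  ext1 x
  rw [← indicator_comp_right, show HMul.hMul c = (fun x : ℝ => c * x) from rfl,
    preimage_const_mul_Iic₀ _ hc, mul_div_cancel_left₀ _ hc.ne']
  rfl

lemma tube_aux {a t : ℝ} (ha : 0 ≤ a) (ht : 0 < t) :
    IntegrableOn (fun z => z * Real.exp (-(z ^ 2 * t) / 2)) (Ioi a) ∧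
      ∫ z in Ioi a, z * Real.exp (-(z ^ 2 * t) / 2) = Real.exp (-(a ^ 2 * t) / 2) / t := by
  have hderiv : ∀ z ∈ Ici a, HasDerivAt (fun w : ℝ => -Real.exp (-(w ^ 2 * t) / 2) / t)
      (z * Real.exp (-(z ^ 2 * t) / 2)) z := by
    intro z _
    have h1 : HasDerivAt (fun w : ℝ => -(w ^ 2 * t) / 2) (-(2 * z * t) / 2) z := by
      have := ((hasDerivAt_pow 2 z).mul_const t).div_const 2 |>.neg
      simpa [neg_div, Pi.neg_def] using this.congr_deriv (by ring)
    have h2 := (h1.exp.neg.div_const t)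
    simp only [Pi.neg_def] at h2
    refine h2.congr_deriv ?_
    field_simp
  have hnn : ∀ z ∈ Ioi a, 0 ≤ z * Real.exp (-(z ^ 2 * t) / 2) := fun z hz =>
    mul_nonneg (le_trans ha (le_of_lt hz)) (Real.exp_pos _).le
  have htend : Filter.Tendsto (fun w : ℝ => -Real.exp (-(w ^ 2 * t) / 2) / t)
      Filter.atTop (nhds 0) := by
    have h0 : Filter.Tendsto (fun w : ℝ => -(w ^ 2 * t) / 2) Filter.atTop Filter.atBot := by
      have := (Filter.tendsto_pow_atTop (n := 2) two_ne_zero).atTop_mul_const_of_neg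
        (show -(t) / 2 < 0 by linarith)
      apply this.congr'
      filter_upwards with w
      ring
    have := (Real.tendsto_exp_atBot.comp h0).neg.div_const t
    simpa using this
  refine ⟨integrableOn_Ioi_deriv_of_nonneg' hderiv hnn htend, ?_⟩
  rw [integral_Ioi_of_hasDerivAt_of_nonneg' hderiv hnn htend]
  field_simp
  ring


lemma Phi_sub (x : ℝ) {c : ℝ} (hc : 0 < c) :
    Phi (c * x) = ∫ y in Iic x, c * (Real.exp (-(c * y) ^ 2 / 2) / Real.sqrt (2 * π)) := by
  have h := my_integral_comp_mul_left_Iic (fun u => Real.exp (-u ^ 2 / 2) / Real.sqrt (2 * π)) x hc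
  rw [Phi]
  calc (∫ u in Iic (c * x), Real.exp (-u ^ 2 / 2) / Real.sqrt (2 * π))
      = c • (c⁻¹ • ∫ u in Iic (c * x), Real.exp (-u ^ 2 / 2) / Real.sqrt (2 * π)) := by
        rw [smul_smul, mul_inv_cancel₀ hc.ne', one_smul]
    _ = c • ∫ y in Iic x, Real.exp (-(c * y) ^ 2 / 2) / Real.sqrt (2 * π) := by rw [← h]
    _ = ∫ y in Iic x, c * (Real.exp (-(c * y) ^ 2 / 2) / Real.sqrt (2 * π)) := by
        rw [← integral_smul]
        simp [smul_eq_mul]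

set_option maxHeartbeats 1000000 in
theorem nc1_cdf (β c₁ α x : ℝ) (hβ : 0 < β) (hβ1 : β < 1) (hα : α = β / (1 - β))
    (hc₁ : c₁ = Real.sqrt (1 - β) * Real.exp (-(β / (2 * (1 - β)))) /
        (2 * π * Phi (-Real.sqrt (β / (1 - β))))) :
    ∫ y in Set.Iic x, c₁ * Real.exp (-(β * y ^ 2) / 2) / (1 + (1 - β) * y ^ 2)
      = (1 / (Real.sqrt (2 * π) * Phi (-Real.sqrt α))) *
          ∫ z in Set.Ioi (Real.sqrt α),
            Phi (Real.sqrt (1 - β) * z * x) * Real.exp (-z ^ 2 / 2) := by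
  have hb : (0:ℝ) < 1 - β := by linarith
  have hαpos : 0 < α := by rw [hα]; positivity
  have hs : 0 < Real.sqrt α := Real.sqrt_pos.mpr hαpos
  have hssq : Real.sqrt α ^ 2 = α := Real.sq_sqrt hαpos.le
  have hab : α * (1 - β) = β := by rw [hα, div_mul_cancel₀ _ hb.ne']
  have ht : ∀ y : ℝ, (0:ℝ) < 1 + (1 - β) * y ^ 2 := fun y => by positivity
  set s := Real.sqrt α with hsdef
  set g : ℝ → ℝ → ℝ := fun z y => z * Real.exp (-(z ^ 2 * (1 + (1 - β) * y ^ 2)) / 2) with hg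
  -- tube lemma instances
  have tubeI : ∀ y : ℝ, IntegrableOn (fun z => g z y) (Ioi s) := fun y =>
    (tube_aux hs.le (ht y)).1
  have tubeE : ∀ y : ℝ, (∫ z in Ioi s, g z y)
      = Real.exp (-(α * (1 + (1 - β) * y ^ 2)) / 2) / (1 + (1 - β) * y ^ 2) := by
    intro y
    rw [hg]
    rw [(tube_aux hs.le (ht y)).2, hssq]
  -- Fubini integrability
  have hgint : Integrable (Function.uncurry g)
      ((volume.restrict (Ioi s)).prod (volume.restrict (Iic x))) := by
    rw [integrable_prod_iff']
    · constructor
      · exact Filter.Eventually.of_forall fun y => tubeI y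
      · have hnorm : ∀ y : ℝ, (∫ z in Ioi s, ‖g z y‖)
            = Real.exp (-(α * (1 + (1 - β) * y ^ 2)) / 2) / (1 + (1 - β) * y ^ 2) := by
          intro y
          rw [← tubeE y]
          refine setIntegral_congr_fun measurableSet_Ioi fun z hz => ?_
          exact abs_of_nonneg (mul_nonneg (le_trans hs.le (le_of_lt hz)) (Real.exp_pos _).le)
        have hbound : Integrable (fun y : ℝ => Real.exp (-α / 2) * Real.exp (-(β/2) * y ^ 2))
            (volume.restrict (Iic x)) :=
          ((integrable_exp_neg_mul_sq (by linarith : (0:ℝ) < β/2)).const_mul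
            (Real.exp (-α / 2))).integrableOn
        have hfun : (fun y : ℝ => ∫ z in Ioi s, ‖Function.uncurry g (z, y)‖)
            = fun y : ℝ => Real.exp (-(α * (1 + (1 - β) * y ^ 2)) / 2) / (1 + (1 - β) * y ^ 2) :=
          funext fun y => hnorm y
        rw [hfun]
        refine hbound.mono' ?_ ?_
        · exact (Continuous.div (by continuity) (by continuity)
            fun y => (ht y).ne').aestronglyMeasurable
        · filter_upwards with y
          rw [Real.norm_eq_abs,
            abs_of_nonneg (div_nonneg (Real.exp_pos _).le (ht y).le)]
          have h1 : Real.exp (-(α * (1 + (1 - β) * y ^ 2)) / 2) / (1 + (1 - β) * y ^ 2)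
              ≤ Real.exp (-(α * (1 + (1 - β) * y ^ 2)) / 2) :=
            div_le_self (Real.exp_pos _).le (by nlinarith [sq_nonneg y])
          refine h1.trans (le_of_eq ?_)
          rw [← Real.exp_add]
          congr 1
          linear_combination (-(y ^ 2) / 2) * hab
    · refine Continuous.aestronglyMeasurable ?_
      rw [hg]
      unfold Function.uncurry
      fun_prop
  -- step 1: rewrite Phi via substitution
  have step1 : (∫ z in Ioi s, Phi (Real.sqrt (1 - β) * z * x) * Real.exp (-z ^ 2 / 2))
      = ∫ z in Ioi s, ∫ y in Iic x, (Real.sqrt (1 - β) / Real.sqrt (2 * π)) * g z y := by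
    refine setIntegral_congr_fun measurableSet_Ioi fun z hz => ?_
    have hz0 : 0 < z := lt_trans hs hz
    have hc : 0 < Real.sqrt (1 - β) * z := mul_pos (Real.sqrt_pos.mpr hb) hz0
    rw [Phi_sub x hc, ← integral_mul_const]
    refine setIntegral_congr_fun measurableSet_Iic fun y _ => ?_
    have hE : Real.exp (-(Real.sqrt (1 - β) * z * y) ^ 2 / 2) * Real.exp (-z ^ 2 / 2)
        = Real.exp (-(z ^ 2 * (1 + (1 - β) * y ^ 2)) / 2) := by
      rw [← Real.exp_add]
      congr 1
      rw [mul_pow, mul_pow, Real.sq_sqrt hb.le]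
      ring
    calc Real.sqrt (1 - β) * z * (Real.exp (-(Real.sqrt (1 - β) * z * y) ^ 2 / 2) /
            Real.sqrt (2 * π)) * Real.exp (-z ^ 2 / 2)
        = Real.sqrt (1 - β) / Real.sqrt (2 * π) *
            (z * (Real.exp (-(Real.sqrt (1 - β) * z * y) ^ 2 / 2) * Real.exp (-z ^ 2 / 2))) := by
          ring
      _ = Real.sqrt (1 - β) / Real.sqrt (2 * π) * g z y := by rw [hE]
  -- step 2: swap
  have step2 : (∫ z in Ioi s, ∫ y in Iic x, (Real.sqrt (1 - β) / Real.sqrt (2 * π)) * g z y)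
      = Real.sqrt (1 - β) / Real.sqrt (2 * π) *
          ∫ y in Iic x, Real.exp (-(α * (1 + (1 - β) * y ^ 2)) / 2) / (1 + (1 - β) * y ^ 2) := by
    simp_rw [integral_const_mul]
    rw [integral_integral_swap hgint]
    congr 1
    exact setIntegral_congr_fun measurableSet_Iic fun y _ => tubeE y
  rw [← hα] at hc₁
  rw [step1, step2, ← integral_const_mul, ← integral_const_mul]
  refine setIntegral_congr_fun measurableSet_Iic fun y _ => ?_
  have h2π : Real.sqrt (2 * π) * Real.sqrt (2 * π) = 2 * π :=
    Real.mul_self_sqrt (by positivity)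
  have hΦ : 0 < Phi (-s) := Phi_pos _
  have hEsplit : Real.exp (-(α * (1 + (1 - β) * y ^ 2)) / 2)
      = Real.exp (-(β / (2 * (1 - β)))) * Real.exp (-(β * y ^ 2) / 2) := by
    rw [← Real.exp_add]
    congr 1
    have h' : β / (2 * (1 - β)) = α / 2 := by rw [hα, div_div, mul_comm]
    rw [h']
    linear_combination (-(y ^ 2) / 2) * hab
  rw [hc₁, hEsplit, ← h2π]
  field_simp
  rw [← hsdef, Real.sq_sqrt (by positivity), mul_div_assoc, div_self hΦ.ne', mul_one]
end

section
/- With Iₙ = ∫_{√α}^∞ (z²-α)^{n-1}·exp(-z²/2) dz for α > 0, the recurrence Iₙ = (2n-3-α)·I_{n-1} + 2α(n-2)·I_{n-2} holds for all integers n > 2. -/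
open MeasureTheory Real Set Filter Topology

lemma aux_intOn (α : ℝ) (hα : 0 < α) (j : ℕ) :
    IntegrableOn (fun z : ℝ => (z ^ 2 - α) ^ j * Real.exp (-z ^ 2 / 2))
      (Set.Ioi (Real.sqrt α)) := by
  have hsub : Set.Ioi (Real.sqrt α) ⊆ Set.Ioi (0 : ℝ) :=
    Set.Ioi_subset_Ioi (Real.sqrt_pos.mpr hα).le
  have base : ∀ i : ℕ, IntegrableOn (fun z : ℝ => z ^ i * Real.exp (-z ^ 2 / 2))
      (Set.Ioi (Real.sqrt α)) := by
    intro i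
    have h := integrableOn_rpow_mul_exp_neg_mul_sq (b := 1/2) one_half_pos
      (s := (i : ℝ)) ((by norm_num : (-1:ℝ) < 0).trans_le (Nat.cast_nonneg i))
    have h2 := h.mono_set hsub
    refine h2.congr_fun (fun x hx => ?_) measurableSet_Ioi
    have hx0 : 0 < x := lt_trans (Real.sqrt_pos.mpr hα) hx
    dsimp only
    rw [Real.rpow_natCast]
    ring_nf
  have hfun : ∀ z : ℝ, (z ^ 2 - α) ^ j * Real.exp (-z ^ 2 / 2) =
      ∑ i ∈ Finset.range (j + 1),
        ((-α) ^ (j - i) * (j.choose i) : ℝ) * (z ^ (2 * i) * Real.exp (-z ^ 2 / 2)) := by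
    intro z
    rw [show z ^ 2 - α = z ^ 2 + (-α) by ring, add_pow, Finset.sum_mul]
    refine Finset.sum_congr rfl fun i _ => ?_
    rw [pow_mul]
    ring
  simp only [hfun]
  exact integrable_finset_sum _ fun i _ => (base (2 * i)).const_mul _

theorem ncn_norm_recurrence (α : ℝ) (hα : 0 < α)
    (I : ℕ → ℝ)
    (hI : ∀ n, I n = ∫ z in Set.Ioi (Real.sqrt α), (z ^ 2 - α) ^ (n - 1) * Real.exp (-z ^ 2 / 2))
    (n : ℕ) (hn : 2 < n) :
    I n = (2 * (n : ℝ) - 3 - α) * I (n - 1) + 2 * α * ((n : ℝ) - 2) * I (n - 2) := by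
  obtain ⟨k, rfl⟩ : ∃ k, n = k + 3 := ⟨n - 3, by omega⟩
  set s := Real.sqrt α with hs
  have hs0 : 0 < s := Real.sqrt_pos.mpr hα
  have hs2 : s ^ 2 = α := Real.sq_sqrt hα.le
  have e0 := aux_intOn α hα k
  have e1 := aux_intOn α hα (k + 1)
  have e2 := aux_intOn α hα (k + 2)
  -- the function for integration by parts
  set F : ℝ → ℝ := fun z => (z ^ 2 - α) ^ (k + 1) * z * Real.exp (-z ^ 2 / 2) with hF
  set G : ℝ → ℝ := fun z =>
      (-1 : ℝ) * ((z ^ 2 - α) ^ (k + 2) * Real.exp (-z ^ 2 / 2))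
      + (2 * (k : ℝ) + 3 - α) * ((z ^ 2 - α) ^ (k + 1) * Real.exp (-z ^ 2 / 2))
      + (2 * α * ((k : ℝ) + 1)) * ((z ^ 2 - α) ^ k * Real.exp (-z ^ 2 / 2)) with hG
  have hderiv : ∀ z : ℝ, HasDerivAt F (G z) z := by
    intro z
    have h1 : HasDerivAt (fun z : ℝ => z ^ 2 - α) (2 * z) z := by
      simpa using (hasDerivAt_pow 2 z).sub_const α
    have h2 := (h1.pow (k + 1)).mul (hasDerivAt_id z)
    have h3 : HasDerivAt (fun z : ℝ => Real.exp (-z ^ 2 / 2)) (Real.exp (-z ^ 2 / 2) * (-z)) z := by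
      have hi : HasDerivAt (fun z : ℝ => -z ^ 2 / 2) (-z) z := by
        have h := (hasDerivAt_pow 2 z).neg.div_const 2
        refine h.congr_deriv ?_
        push_cast
        ring
      simpa using hi.exp
    have h4 := h2.mul h3
    refine h4.congr_deriv ?_
    simp only [hG, Nat.add_sub_cancel, id_def, Pi.mul_apply, Pi.pow_apply]
    push_cast
    ring
  have hGint : IntegrableOn G (Set.Ioi s) :=
    (((e2.const_mul _).add (e1.const_mul _)).add (e0.const_mul _))
  have hFcont : ContinuousWithinAt F (Set.Ici s) s := (hderiv s).continuousAt.continuousWithinAt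
  -- tendsto 0 at top
  have hb : Tendsto (fun z : ℝ => z ^ (2 * k + 4) * Real.exp (-z ^ 2 / 2)) atTop (𝓝 0) := by
    have h1 := tendsto_pow_mul_exp_neg_atTop_nhds_zero (k + 2)
    have h2 : Tendsto (fun z : ℝ => z ^ 2 / 2) atTop atTop :=
      (tendsto_pow_atTop two_ne_zero).atTop_div_const two_pos
    have h3 := h1.comp h2
    have h4 := h3.const_mul ((2 : ℝ) ^ (k + 2))
    rw [mul_zero] at h4
    refine h4.congr fun z => ?_
    simp only [Function.comp]
    rw [div_pow]
    field_simp
    ring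
  have hFt : Tendsto F atTop (𝓝 0) := by
    refine squeeze_zero' ?_ ?_ hb
    · filter_upwards [eventually_ge_atTop s] with z hz
      have hz0 : 0 ≤ z := hs0.le.trans hz
      have hzα : α ≤ z ^ 2 := by nlinarith
      exact mul_nonneg (mul_nonneg (pow_nonneg (by linarith) _) hz0) (Real.exp_nonneg _)
    · filter_upwards [eventually_ge_atTop (1 : ℝ), eventually_ge_atTop s] with z h1 h2
      have hzα : α ≤ z ^ 2 := by nlinarith
      have e1' : (z ^ 2 - α) ^ (k + 1) ≤ (z ^ 2) ^ (k + 1) :=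
        pow_le_pow_left₀ (by linarith) (by linarith) _
      have e2' : z ≤ z ^ 2 := by nlinarith
      have h5 : (z ^ 2 - α) ^ (k + 1) * z ≤ (z ^ 2) ^ (k + 1) * z ^ 2 :=
        mul_le_mul e1' e2' (by linarith) (by positivity)
      calc F z ≤ (z ^ 2) ^ (k + 1) * z ^ 2 * Real.exp (-z ^ 2 / 2) :=
            mul_le_mul_of_nonneg_right h5 (Real.exp_nonneg _)
        _ = z ^ (2 * k + 4) * Real.exp (-z ^ 2 / 2) := by ring
  have hzero : ∫ z in Set.Ioi s, G z = 0 - F s :=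
    integral_Ioi_of_hasDerivAt_of_tendsto hFcont (fun x _ => hderiv x) hGint hFt
  have hFs : F s = 0 := by
    simp [hF, hs2]
  rw [hFs, sub_zero] at hzero
  have hsplit : ∫ z in Set.Ioi s, G z =
      (-1 : ℝ) * (∫ z in Set.Ioi s, (z ^ 2 - α) ^ (k + 2) * Real.exp (-z ^ 2 / 2))
      + (2 * (k : ℝ) + 3 - α) * (∫ z in Set.Ioi s, (z ^ 2 - α) ^ (k + 1) * Real.exp (-z ^ 2 / 2))
      + (2 * α * ((k : ℝ) + 1)) * (∫ z in Set.Ioi s, (z ^ 2 - α) ^ k * Real.exp (-z ^ 2 / 2)) := by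
    simp only [hG]
    have hadd : Integrable (fun z : ℝ =>
        (-1 : ℝ) * ((z ^ 2 - α) ^ (k + 2) * Real.exp (-z ^ 2 / 2))
        + (2 * (k : ℝ) + 3 - α) * ((z ^ 2 - α) ^ (k + 1) * Real.exp (-z ^ 2 / 2)))
        (volume.restrict (Set.Ioi s)) := (e2.const_mul _).add (e1.const_mul _)
    rw [integral_add hadd (e0.const_mul _),
      integral_add (e2.const_mul _) (e1.const_mul _), integral_const_mul,
      integral_const_mul, integral_const_mul]
  rw [hsplit] at hzero
  have hIn : I (k + 3) = ∫ z in Set.Ioi s, (z ^ 2 - α) ^ (k + 2) * Real.exp (-z ^ 2 / 2) := by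
    rw [hI, show k + 3 - 1 = k + 2 from by omega]
  have hIn1 : I (k + 3 - 1) = ∫ z in Set.Ioi s, (z ^ 2 - α) ^ (k + 1) * Real.exp (-z ^ 2 / 2) := by
    rw [hI, show k + 3 - 1 - 1 = k + 1 from by omega]
  have hIn2 : I (k + 3 - 2) = ∫ z in Set.Ioi s, (z ^ 2 - α) ^ k * Real.exp (-z ^ 2 / 2) := by
    rw [hI, show k + 3 - 2 - 1 = k from by omega]
  rw [hIn, hIn1, hIn2]
  push_cast
  linarith [hzero]
end

section
/- The NC(1) density f(x) = c₁·exp(-β x²/2)/(1+(1-β)x²) converges pointwise to the Cauchy density 1/(π(1+x²)) as β → 0⁺, and to the standard normal density exp(-x²/2)/√(2π) as β → 1⁻. -/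
open MeasureTheory Real Set

/-- The NC(1) density with tail-weight parameter `β`. -/
noncomputable def nc1pdf (β x : ℝ) : ℝ :=
  (Real.sqrt (1 - β) * Real.exp (-(β / (2 * (1 - β)))) /
      (2 * π * Phi (-Real.sqrt (β / (1 - β))))) *
    Real.exp (-(β * x ^ 2) / 2) / (1 + (1 - β) * x ^ 2)

lemma g_int : Integrable (fun u : ℝ => Real.exp (-u ^ 2 / 2)) := by
  have := integrable_exp_neg_mul_sq (b := (1/2 : ℝ)) (by norm_num)
  convert this using 2 with u
  ring_nf

lemma g_total : ∫ u : ℝ, Real.exp (-u ^ 2 / 2) = Real.sqrt (2 * π) := by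
  have := integral_gaussian (1/2 : ℝ)
  rw [show π / (1/2 : ℝ) = 2 * π by ring] at this
  rw [← this]
  congr 1 with u
  ring_nf

lemma g_sym (s : ℝ) : ∫ u in Iic (-s), Real.exp (-u ^ 2 / 2)
    = ∫ u in Ioi s, Real.exp (-u ^ 2 / 2) := by
  have h := integral_comp_neg_Iic (c := -s) (f := fun u : ℝ => Real.exp (-u ^ 2 / 2))
  simp only [neg_neg] at h
  rw [← h]
  congr 1 with u
  ring_nf

lemma g_half : ∫ u in Iic (0:ℝ), Real.exp (-u ^ 2 / 2) = Real.sqrt (2 * π) / 2 := by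
  have h1 := g_sym 0
  simp only [neg_zero] at h1
  have h2 := integral_add_compl (measurableSet_Iic (a := (0:ℝ))) g_int
  rw [compl_Iic, g_total, ← h1] at h2
  linarith

lemma int_xg (s : ℝ) : ∫ u in Ioi s, u * Real.exp (-u ^ 2 / 2) = Real.exp (-s ^ 2 / 2) := by
  have hderiv : ∀ u ∈ Ici s, HasDerivAt (fun u : ℝ => -Real.exp (-u ^ 2 / 2))
      (u * Real.exp (-u ^ 2 / 2)) u := by
    intro u _
    have h1 : HasDerivAt (fun u : ℝ => -u ^ 2 / 2) (-u) u := by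
      have := ((hasDerivAt_pow 2 u).neg).div_const 2
      simpa using this.congr_deriv (by push_cast; ring)
    have := (h1.exp).neg
    refine this.congr_deriv ?_
    ring
  have htend : Filter.Tendsto (fun u : ℝ => -Real.exp (-u ^ 2 / 2)) Filter.atTop (nhds 0) := by
    rw [show (0:ℝ) = -0 by ring]
    apply Filter.Tendsto.neg
    apply Real.tendsto_exp_atBot.comp
    apply Filter.Tendsto.atBot_div_const (by norm_num)
    exact Filter.tendsto_neg_atBot_iff.mpr (Filter.tendsto_pow_atTop (two_ne_zero))
  have hint : IntegrableOn (fun u : ℝ => u * Real.exp (-u ^ 2 / 2)) (Ioi s) := by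
    have := integrable_mul_exp_neg_mul_sq (b := (1/2:ℝ)) (by norm_num)
    have : Integrable (fun u : ℝ => u * Real.exp (-u ^ 2 / 2)) := by
      convert this using 2 with u; ring_nf
    exact this.integrableOn
  have := integral_Ioi_of_hasDerivAt_of_tendsto
    ((hderiv s (self_mem_Ici)).continuousAt.continuousWithinAt)
    (fun x hx => hderiv x (mem_Ici.mpr (le_of_lt hx))) hint htend
  rw [this]; ring

lemma exp_tendsto : Filter.Tendsto (fun u : ℝ => Real.exp (-u ^ 2 / 2)) Filter.atTop (nhds 0) := by
  apply Real.tendsto_exp_atBot.comp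
  apply Filter.Tendsto.atBot_div_const (by norm_num)
  exact Filter.tendsto_neg_atBot_iff.mpr (Filter.tendsto_pow_atTop two_ne_zero)

lemma hd2 (u : ℝ) : HasDerivAt (fun u : ℝ => -(u / (1 + u ^ 2) * Real.exp (-u ^ 2 / 2)))
    (Real.exp (-u ^ 2 / 2) * (u ^ 4 + 2 * u ^ 2 - 1) / (1 + u ^ 2) ^ 2) u := by
  have hpos : (1 : ℝ) + u ^ 2 ≠ 0 := by positivity
  have h1 : HasDerivAt (fun u : ℝ => 1 + u ^ 2) (2 * u) u := by
    simpa using ((hasDerivAt_pow 2 u).const_add 1)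
  have hq : HasDerivAt (fun u : ℝ => u / (1 + u ^ 2))
      ((1 * (1 + u ^ 2) - u * (2 * u)) / (1 + u ^ 2) ^ 2) u :=
    (hasDerivAt_id u).div h1 hpos
  have he : HasDerivAt (fun u : ℝ => Real.exp (-u ^ 2 / 2)) (Real.exp (-u ^ 2 / 2) * (-u)) u := by
    have h0 : HasDerivAt (fun u : ℝ => -u ^ 2 / 2) (-u) u := by
      have := ((hasDerivAt_pow 2 u).neg).div_const 2
      refine this.congr_deriv ?_; push_cast; ring
    exact h0.exp
  have := (hq.mul he).neg
  refine this.congr_deriv ?_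
  field_simp
  ring

lemma int_lower (s : ℝ) : ∫ u in Ioi s,
    Real.exp (-u ^ 2 / 2) * (u ^ 4 + 2 * u ^ 2 - 1) / (1 + u ^ 2) ^ 2
    = s / (1 + s ^ 2) * Real.exp (-s ^ 2 / 2) := by
  have hint : IntegrableOn (fun u : ℝ =>
      Real.exp (-u ^ 2 / 2) * (u ^ 4 + 2 * u ^ 2 - 1) / (1 + u ^ 2) ^ 2) (Ioi s) := by
    apply Integrable.mono' (g_int.restrict)
    · apply Continuous.aestronglyMeasurable
      fun_prop (disch := intros; positivity)
    · filter_upwards with u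
      have h1 : (0:ℝ) < 1 + u ^ 2 := by positivity
      rw [norm_div, norm_mul, Real.norm_eq_abs, Real.norm_eq_abs, Real.norm_eq_abs,
        abs_of_pos (Real.exp_pos _), abs_of_pos (by positivity : (0:ℝ) < (1+u^2)^2)]
      rw [div_le_iff₀ (by positivity)]
      have : |u ^ 4 + 2 * u ^ 2 - 1| ≤ (1 + u ^ 2) ^ 2 := by
        rw [abs_le]; constructor <;> nlinarith [sq_nonneg u, sq_nonneg (u^2)]
      nlinarith [Real.exp_pos (-u^2/2), this, abs_nonneg (u ^ 4 + 2 * u ^ 2 - 1)]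
  have htend : Filter.Tendsto (fun u : ℝ => -(u / (1 + u ^ 2) * Real.exp (-u ^ 2 / 2)))
      Filter.atTop (nhds 0) := by
    rw [show (0:ℝ) = -0 by ring]
    apply Filter.Tendsto.neg
    apply squeeze_zero' ?_ ?_ exp_tendsto
    · filter_upwards [Filter.eventually_ge_atTop (0:ℝ)] with u hu
      positivity
    · filter_upwards [Filter.eventually_ge_atTop (0:ℝ)] with u hu
      have h1 : (0:ℝ) < 1 + u ^ 2 := by positivity
      have : u / (1 + u ^ 2) ≤ 1 := by rw [div_le_one h1]; nlinarith
      nlinarith [Real.exp_pos (-u^2/2)]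
  have := integral_Ioi_of_hasDerivAt_of_tendsto
    ((hd2 s).continuousAt.continuousWithinAt)
    (fun x _ => hd2 x) hint htend
  rw [this]; ring

lemma I_ge (s : ℝ) : s / (1 + s ^ 2) * Real.exp (-s ^ 2 / 2)
    ≤ ∫ u in Ioi s, Real.exp (-u ^ 2 / 2) := by
  rw [← int_lower]
  apply setIntegral_mono_on ?_ (g_int.integrableOn) measurableSet_Ioi
  · intro u _
    have h1 : (0:ℝ) < 1 + u ^ 2 := by positivity
    rw [div_le_iff₀ (by positivity)]
    nlinarith [Real.exp_pos (-u^2/2)]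
  · apply Integrable.mono' (g_int.restrict)
    · apply Continuous.aestronglyMeasurable
      fun_prop (disch := intros; positivity)
    · filter_upwards with u
      have h1 : (0:ℝ) < 1 + u ^ 2 := by positivity
      rw [norm_div, norm_mul, Real.norm_eq_abs, Real.norm_eq_abs, Real.norm_eq_abs,
        abs_of_pos (Real.exp_pos _), abs_of_pos (by positivity : (0:ℝ) < (1+u^2)^2)]
      rw [div_le_iff₀ (by positivity)]
      have : |u ^ 4 + 2 * u ^ 2 - 1| ≤ (1 + u ^ 2) ^ 2 := by
        rw [abs_le]; constructor <;> nlinarith [sq_nonneg u, sq_nonneg (u^2)]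
      nlinarith [Real.exp_pos (-u^2/2), this, abs_nonneg (u ^ 4 + 2 * u ^ 2 - 1)]

lemma I_le (s : ℝ) (hs : 0 < s) : (∫ u in Ioi s, Real.exp (-u ^ 2 / 2))
    ≤ Real.exp (-s ^ 2 / 2) / s := by
  have hint : IntegrableOn (fun u : ℝ => u * Real.exp (-u ^ 2 / 2)) (Ioi s) := by
    have h := integrable_mul_exp_neg_mul_sq (b := (1/2:ℝ)) (by norm_num)
    have : Integrable (fun u : ℝ => u * Real.exp (-u ^ 2 / 2)) := by
      convert h using 2 with u; ring_nf
    exact this.integrableOn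
  have step : (∫ u in Ioi s, Real.exp (-u ^ 2 / 2))
      ≤ ∫ u in Ioi s, u * Real.exp (-u ^ 2 / 2) / s := by
    apply setIntegral_mono_on (g_int.integrableOn) (hint.div_const s) measurableSet_Ioi
    intro u hu
    rw [le_div_iff₀ hs]
    have hu' : s ≤ u := le_of_lt hu
    nlinarith [Real.exp_pos (-u^2/2)]
  calc (∫ u in Ioi s, Real.exp (-u ^ 2 / 2)) ≤ ∫ u in Ioi s, u * Real.exp (-u ^ 2 / 2) / s := step
    _ = (∫ u in Ioi s, u * Real.exp (-u ^ 2 / 2)) / s := integral_div s _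
    _ = Real.exp (-s ^ 2 / 2) / s := by rw [int_xg]

lemma sqrt2pi_pos : 0 < Real.sqrt (2 * π) := Real.sqrt_pos.mpr (by positivity)

lemma Phi_eq (t : ℝ) : Phi t = (∫ u in Iic t, Real.exp (-u ^ 2 / 2)) / Real.sqrt (2 * π) := by
  unfold Phi; rw [integral_div]

lemma Phi_zero : Phi 0 = 1 / 2 := by
  rw [Phi_eq, g_half, div_div, div_eq_iff (by positivity)]
  ring

lemma Phi_neg (s : ℝ) : Phi (-s) = (∫ u in Ioi s, Real.exp (-u ^ 2 / 2)) / Real.sqrt (2 * π) := by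
  rw [Phi_eq, g_sym]

lemma Phi_cont : Continuous Phi := by
  have hint : Integrable (fun u : ℝ => Real.exp (-u ^ 2 / 2) / Real.sqrt (2 * π)) :=
    g_int.div_const _
  have heq : Phi = fun t => Phi 0 + ∫ u in (0:ℝ)..t, Real.exp (-u ^ 2 / 2) / Real.sqrt (2 * π) := by
    funext t
    rw [← intervalIntegral.integral_Iic_sub_Iic (hint.integrableOn) (hint.integrableOn)]
    unfold Phi; ring
  rw [heq]
  exact continuous_const.add (hint.continuous_primitive 0)

lemma part1 (x : ℝ) : Filter.Tendsto (fun β => nc1pdf β x) (nhdsWithin 0 (Set.Ioo (0 : ℝ) 1))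
      (nhds (1 / (π * (1 + x ^ 2)))) := by
  have hq : ContinuousAt (fun β : ℝ => β / (1 - β)) 0 := by
    apply ContinuousAt.div continuousAt_id (by fun_prop)
    norm_num
  have hs : ContinuousAt (fun β : ℝ => -Real.sqrt (β / (1 - β))) 0 :=
    (Real.continuous_sqrt.continuousAt.comp hq).neg
  have hP : ContinuousAt (fun β : ℝ => Phi (-Real.sqrt (β / (1 - β)))) 0 :=
    Phi_cont.continuousAt.comp hs
  have hPne : 2 * π * Phi (-Real.sqrt ((0:ℝ) / (1 - 0))) ≠ 0 := by
    norm_num [Phi_zero]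
  have hall : ContinuousAt (fun β : ℝ => nc1pdf β x) 0 := by
    unfold nc1pdf
    apply ContinuousAt.div _ (by fun_prop) (by norm_num; positivity)
    apply ContinuousAt.mul _ (by fun_prop (disch := norm_num))
    exact ContinuousAt.div (by fun_prop (disch := norm_num)) (continuousAt_const.mul hP) hPne
  have hval : nc1pdf 0 x = 1 / (π * (1 + x ^ 2)) := by
    unfold nc1pdf
    norm_num [Phi_zero]
    field_simp
  rw [← hval]
  exact hall.tendsto.mono_left nhdsWithin_le_nhds

lemma c1_tendsto : Filter.Tendsto
    (fun β : ℝ => Real.sqrt (1 - β) * Real.exp (-(β / (2 * (1 - β)))) /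
      (2 * π * Phi (-Real.sqrt (β / (1 - β)))))
    (nhdsWithin 1 (Set.Ioo (0 : ℝ) 1)) (nhds (1 / Real.sqrt (2 * π))) := by
  have hlow : ∀ β ∈ Set.Ioo (0:ℝ) 1,
      Real.sqrt β / Real.sqrt (2 * π) ≤ Real.sqrt (1 - β) * Real.exp (-(β / (2 * (1 - β)))) /
        (2 * π * Phi (-Real.sqrt (β / (1 - β)))) ∧
      Real.sqrt (1 - β) * Real.exp (-(β / (2 * (1 - β)))) /
        (2 * π * Phi (-Real.sqrt (β / (1 - β)))) ≤ 1 / (Real.sqrt β * Real.sqrt (2 * π)) := by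
    rintro β ⟨hb0, hb1⟩
    have h1b : (0:ℝ) < 1 - β := by linarith
    set s : ℝ := Real.sqrt (β / (1 - β)) with hs_def
    have hspos : 0 < s := Real.sqrt_pos.mpr (div_pos hb0 h1b)
    have hsq : s ^ 2 = β / (1 - β) := Real.sq_sqrt (le_of_lt (div_pos hb0 h1b))
    have hsb : s * Real.sqrt (1 - β) = Real.sqrt β := by
      rw [hs_def, ← Real.sqrt_mul (le_of_lt (div_pos hb0 h1b))]
      congr 1
      field_simp
    have hsq1b : Real.sqrt (1 - β) ^ 2 = 1 - β := Real.sq_sqrt h1b.le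
    have hsqb : Real.sqrt β ^ 2 = β := Real.sq_sqrt hb0.le
    have h1bs : Real.sqrt (1 - β) > 0 := Real.sqrt_pos.mpr h1b
    have hbs : Real.sqrt β > 0 := Real.sqrt_pos.mpr hb0
    set I : ℝ := ∫ u in Ioi s, Real.exp (-u ^ 2 / 2) with hI_def
    set E : ℝ := Real.exp (-s ^ 2 / 2) with hE_def
    have hEpos : 0 < E := Real.exp_pos _
    have hIge : s / (1 + s ^ 2) * E ≤ I := I_ge s
    have hIle : I ≤ E / s := I_le s hspos
    have hIpos : 0 < I := lt_of_lt_of_le (by positivity) hIge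
    have hexp_eq : Real.exp (-(β / (2 * (1 - β)))) = E := by
      rw [hE_def, hsq]; congr 1; rw [neg_div, div_div]; ring_nf
    have hPhiI : 2 * π * Phi (-s) = Real.sqrt (2 * π) * I := by
      rw [Phi_neg, ← hI_def,
        show (2:ℝ) * π = Real.sqrt (2*π) * Real.sqrt (2*π) from (Real.mul_self_sqrt (by positivity)).symm]
      field_simp
      rw [Real.sqrt_sq (by positivity)]
    have key1 : Real.sqrt β * I ≤ Real.sqrt (1 - β) * E := by
      calc Real.sqrt β * I ≤ Real.sqrt β * (E / s) := by
            exact mul_le_mul_of_nonneg_left hIle hbs.le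
        _ = Real.sqrt (1 - β) * E := by
            rw [← hsb]; field_simp
    have key2 : Real.sqrt β * Real.sqrt (1 - β) * E ≤ I := by
      refine le_trans ?_ hIge
      have h1s : 1 + s ^ 2 = 1 / (1 - β) := by rw [hsq]; field_simp; ring
      have : s / (1 + s ^ 2) = Real.sqrt β * Real.sqrt (1 - β) := by
        rw [h1s, div_div_eq_mul_div, div_one, ← hsb, mul_assoc, ← pow_two, hsq1b]
      rw [this]
    rw [hexp_eq, hPhiI]
    constructor
    · rw [div_le_div_iff₀ sqrt2pi_pos (by positivity)]
      nlinarith [sqrt2pi_pos]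
    · rw [div_le_div_iff₀ (by positivity) (by positivity)]
      nlinarith [sqrt2pi_pos]
  have hlim1 : Filter.Tendsto (fun β : ℝ => Real.sqrt β / Real.sqrt (2 * π))
      (nhdsWithin 1 (Set.Ioo (0 : ℝ) 1)) (nhds (1 / Real.sqrt (2 * π))) := by
    have : ContinuousAt (fun β : ℝ => Real.sqrt β / Real.sqrt (2 * π)) 1 := by
      fun_prop (disch := exact ne_of_gt sqrt2pi_pos)
    have h := this.tendsto.mono_left
      (nhdsWithin_le_nhds : nhdsWithin 1 (Set.Ioo (0:ℝ) 1) ≤ nhds 1)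
    simpa using h
  have hlim2 : Filter.Tendsto (fun β : ℝ => 1 / (Real.sqrt β * Real.sqrt (2 * π)))
      (nhdsWithin 1 (Set.Ioo (0 : ℝ) 1)) (nhds (1 / Real.sqrt (2 * π))) := by
    have hne : Real.sqrt (1:ℝ) * Real.sqrt (2 * π) ≠ 0 := by
      rw [Real.sqrt_one, one_mul]; exact ne_of_gt sqrt2pi_pos
    have : ContinuousAt (fun β : ℝ => 1 / (Real.sqrt β * Real.sqrt (2 * π))) 1 :=
      ContinuousAt.div continuousAt_const
        (Real.continuous_sqrt.continuousAt.mul continuousAt_const) hne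
    have h := this.tendsto.mono_left
      (nhdsWithin_le_nhds : nhdsWithin 1 (Set.Ioo (0:ℝ) 1) ≤ nhds 1)
    simpa [Real.sqrt_one] using h
  apply tendsto_of_tendsto_of_tendsto_of_le_of_le' hlim1 hlim2
  · filter_upwards [self_mem_nhdsWithin] with β hβ using (hlow β hβ).1
  · filter_upwards [self_mem_nhdsWithin] with β hβ using (hlow β hβ).2

lemma part2 (x : ℝ) : Filter.Tendsto (fun β => nc1pdf β x) (nhdsWithin 1 (Set.Ioo (0 : ℝ) 1))
      (nhds (Real.exp (-x ^ 2 / 2) / Real.sqrt (2 * π))) := by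
  have h2 : Filter.Tendsto (fun β : ℝ => Real.exp (-(β * x ^ 2) / 2))
      (nhdsWithin 1 (Set.Ioo (0 : ℝ) 1)) (nhds (Real.exp (-(1 * x ^ 2) / 2))) := by
    exact ((by fun_prop : ContinuousAt (fun β : ℝ => Real.exp (-(β * x ^ 2) / 2)) 1).tendsto).mono_left nhdsWithin_le_nhds
  have h3 : Filter.Tendsto (fun β : ℝ => 1 + (1 - β) * x ^ 2)
      (nhdsWithin 1 (Set.Ioo (0 : ℝ) 1)) (nhds (1 + (1 - 1) * x ^ 2)) := by
    exact ((by fun_prop : ContinuousAt (fun β : ℝ => 1 + (1 - β) * x ^ 2) 1).tendsto).mono_left nhdsWithin_le_nhds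
  have := (c1_tendsto.mul h2).div h3 (by norm_num)
  unfold nc1pdf
  convert this using 2
  · rfl
  · rw [one_mul, sub_self, zero_mul, add_zero, div_one]; ring

theorem nc1_interpolates (x : ℝ) :
    Filter.Tendsto (fun β => nc1pdf β x) (nhdsWithin 0 (Set.Ioo (0 : ℝ) 1))
      (nhds (1 / (π * (1 + x ^ 2)))) ∧
    Filter.Tendsto (fun β => nc1pdf β x) (nhdsWithin 1 (Set.Ioo (0 : ℝ) 1))
      (nhds (Real.exp (-x ^ 2 / 2) / Real.sqrt (2 * π))) :=
  ⟨part1 x, part2 x⟩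
end
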